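/- Let ω_1, …, ω_k be independent random vectors in ℝⁿ whose coordinates are i.i.d. taking values +σ and −σ each with probability 1/2 (scaled Rademacher), where σ > 0, and set Ω = [ω_1, …, ω_k] ∈ ℝ^{n×k}. Then for every fixed v ∈ ℝⁿ, E[‖Ω Ωᵀ v‖²] = k σ⁴ (n + k − 1) ‖v‖². -/

import Mathlib

open MeasureTheory ProbabilityTheory Matrix Finset

/-!
With `ωᵢ` the columns of `Ω`, `‖Ω Ωᵀ v‖² = ∑ᵢ ∑ⱼ ⟨ωᵢ, ωⱼ⟩ ⟨ωᵢ, v⟩ ⟨ωⱼ, v⟩`. A diagonal term has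
`⟨ωᵢ, ωᵢ⟩ = nσ²` almost surely and `E ⟨ωᵢ, v⟩² = σ² ‖v‖²`, so it contributes `nσ⁴ ‖v‖²`. An
off-diagonal term is `∑ₐ (ωᵢₐ ⟨ωᵢ, v⟩) (ωⱼₐ ⟨ωⱼ, v⟩)`, whose two factors are independent with mean
`σ² vₐ` each, so it contributes `σ⁴ ‖v‖²`. Hence the total `k n σ⁴ ‖v‖² + k (k - 1) σ⁴ ‖v‖²`.
-/

theorem Matrix.sum_mul_transpose_mulVec_sq {m κ R : Type*} [Fintype m] [Fintype κ] [CommRing R]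
    (M : Matrix m κ R) (v : m → R) :
    ∑ a, ((M * Mᵀ) *ᵥ v) a ^ 2 = ∑ i, ∑ j, (Mᵀ i ⬝ᵥ Mᵀ j) * ((Mᵀ i ⬝ᵥ v) * (Mᵀ j ⬝ᵥ v)) := by
  set w := Mᵀ *ᵥ v
  calc ∑ a, ((M * Mᵀ) *ᵥ v) a ^ 2 = (M *ᵥ w) ⬝ᵥ (M *ᵥ w) := by
        rw [← mulVec_mulVec]
        exact sum_congr rfl fun a _ => sq _
    _ = (Mᵀ *ᵥ (M *ᵥ w)) ⬝ᵥ w := by rw [dotProduct_mulVec, mulVec_transpose]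
    _ = ∑ i, ∑ j, (Mᵀ i ⬝ᵥ Mᵀ j) * (w i * w j) := by
        simp only [dotProduct, mulVec, sum_mul, mul_sum]
        refine sum_congr rfl fun i _ => ?_
        rw [sum_comm]
        exact sum_congr rfl fun j _ => sum_congr rfl fun a _ => by simp only [transpose_apply]; ring

theorem ProbabilityTheory.iIndepFun.indepFun_curry {Ω κ ι β : Type*} [MeasurableSpace Ω]
    {μ : Measure Ω} [MeasurableSpace β] [Fintype ι] {X : κ × ι → Ω → β}
    (h : iIndepFun X μ) (hX : ∀ p, Measurable (X p)) {i j : κ} (hij : i ≠ j) :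
    IndepFun (fun x a => X (i, a) x) (fun x a => X (j, a) x) μ := by
  classical
  have hdisj : Disjoint (({i} : Finset κ) ×ˢ (univ : Finset ι)) ({j} ×ˢ univ) := by
    simp [Finset.disjoint_left, hij.symm]
  exact (h.indepFun_finset _ _ hdisj hX).comp
    (measurable_pi_lambda _ fun a => measurable_pi_apply ⟨(i, a), by simp⟩)
    (measurable_pi_lambda _ fun a => measurable_pi_apply ⟨(j, a), by simp⟩)

section SignVariable

variable {Ω : Type*} [MeasurableSpace Ω] {μ : Measure Ω} [IsProbabilityMeasure μ] {σ : ℝ}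
  {X : Ω → ℝ}

theorem ae_eq_or_eq_neg_of_measure_eq_half (hσ : σ ≠ 0) (hX : Measurable X)
    (h₁ : μ {x | X x = σ} = 1 / 2) (h₂ : μ {x | X x = -σ} = 1 / 2) :
    ∀ᵐ x ∂μ, X x = σ ∨ X x = -σ := by
  have hdisj : Disjoint {x | X x = σ} {x | X x = -σ} :=
    Set.disjoint_left.2 fun x hpos hneg => hσ (by linarith [hpos.symm.trans hneg])
  rw [ae_iff_measure_eq (by measurability), Set.ofPred_or,
    measure_union hdisj (hX (measurableSet_singleton _)), h₁, h₂, ENNReal.add_halves, measure_univ]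

theorem integral_eq_zero_of_measure_eq_half (hσ : σ ≠ 0) (hX : Measurable X)
    (hval : ∀ᵐ x ∂μ, X x = σ ∨ X x = -σ) (h₂ : μ {x | X x = -σ} = 1 / 2) :
    ∫ x, X x ∂μ = 0 := by
  set t := {x | X x = -σ}
  have ht : MeasurableSet t := hX (measurableSet_singleton _)
  have hX_eq : X =ᵐ[μ] fun x => σ - t.indicator (fun _ => 2 * σ) x := by
    filter_upwards [hval] with x hx
    rcases hx with hx | hx
    · have : x ∉ t := fun hneg => hσ (by linarith [hx.symm.trans hneg])
      rw [Set.indicator_of_notMem this, hx, sub_zero]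
    · rw [Set.indicator_of_mem (show x ∈ t from hx), hx]
      ring
  rw [integral_congr_ae hX_eq,
    integral_sub (integrable_const _) ((integrable_const _).indicator ht), integral_const,
    integral_indicator_const _ ht]
  simp [measureReal_def, h₂]

end SignVariable

/-- Mean zero and values `±σ` pin down the law: `±σ` with probability `1 / 2` each. -/
structure IsRademacherArray {Ω κ ι : Type*} [MeasurableSpace Ω] (μ : Measure Ω) (σ : ℝ)
    (ω : κ → Ω → ι → ℝ) : Prop where
  measurable : ∀ i a, Measurable fun x => ω i x a
  indep : iIndepFun (fun p : κ × ι => fun x => ω p.1 x p.2) μ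
  ae_eq_or_eq_neg : ∀ i a, ∀ᵐ x ∂μ, ω i x a = σ ∨ ω i x a = -σ
  integral_eq_zero : ∀ i a, ∫ x, ω i x a ∂μ = 0

namespace IsRademacherArray

variable {Ω κ ι : Type*} [MeasurableSpace Ω] {μ : Measure Ω} {σ : ℝ} {ω : κ → Ω → ι → ℝ}

theorem indepFun [Fintype ι] (h : IsRademacherArray μ σ ω) {i j : κ} (hij : i ≠ j) :
    IndepFun (ω i) (ω j) μ :=
  h.indep.indepFun_curry (fun p => h.measurable p.1 p.2) hij

theorem ae_dotProduct_self_eq [Fintype ι] (h : IsRademacherArray μ σ ω) (i : κ) :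
    ∀ᵐ x ∂μ, ω i x ⬝ᵥ ω i x = Fintype.card ι * σ ^ 2 := by
  have hval : ∀ᵐ x ∂μ, ∀ a, ω i x a = σ ∨ ω i x a = -σ := ae_all_iff.2 (h.ae_eq_or_eq_neg i)
  filter_upwards [hval] with x hx
  have hsq a : ω i x a * ω i x a = σ ^ 2 := by rcases hx a with e | e <;> rw [e] <;> ring
  simp [dotProduct, hsq]

variable [IsProbabilityMeasure μ]

theorem of_measure_eq_half (hσ : σ ≠ 0) (hmeas : ∀ i a, Measurable fun x => ω i x a)
    (hindep : iIndepFun (fun p : κ × ι => fun x => ω p.1 x p.2) μ)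
    (h₁ : ∀ i a, μ {x | ω i x a = σ} = 1 / 2) (h₂ : ∀ i a, μ {x | ω i x a = -σ} = 1 / 2) :
    IsRademacherArray μ σ ω :=
  have hval i a := ae_eq_or_eq_neg_of_measure_eq_half hσ (hmeas i a) (h₁ i a) (h₂ i a)
  ⟨hmeas, hindep, hval, fun i a =>
    integral_eq_zero_of_measure_eq_half hσ (hmeas i a) (hval i a) (h₂ i a)⟩

theorem integral_mul_eq [DecidableEq ι] (h : IsRademacherArray μ σ ω) (i : κ) (a b : ι) :
    ∫ x, ω i x a * ω i x b ∂μ = if a = b then σ ^ 2 else 0 := by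
  split_ifs with hab
  · subst hab
    have hsq : ∀ᵐ x ∂μ, ω i x a * ω i x a = σ ^ 2 := by
      filter_upwards [h.ae_eq_or_eq_neg i a] with x hx
      rcases hx with e | e <;> rw [e] <;> ring
    simp [integral_congr_ae hsq]
  · have hne : ((i, a) : κ × ι) ≠ (i, b) := by simpa using hab
    rw [(h.indep.indepFun hne).integral_fun_mul_eq_mul_integral
      (h.measurable i a).aestronglyMeasurable (h.measurable i b).aestronglyMeasurable]
    simp [h.integral_eq_zero]

variable [Fintype κ] [Fintype ι]

theorem integrable_comp (h : IsRademacherArray μ σ ω) {F : (κ → ι → ℝ) → ℝ} (hF : Continuous F) :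
    Integrable (fun x => F fun i => ω i x) μ := by
  obtain ⟨C, hC⟩ := (isCompact_closedBall (0 : κ → ι → ℝ) |σ|).exists_bound_of_continuousOn
    hF.continuousOn
  have hmeas : Measurable fun x i => ω i x :=
    measurable_pi_lambda _ fun i => measurable_pi_lambda _ (h.measurable i)
  refine Integrable.of_bound (hF.measurable.comp hmeas).aestronglyMeasurable C ?_
  have hval : ∀ᵐ x ∂μ, ∀ i a, ω i x a = σ ∨ ω i x a = -σ := by
    simpa only [ae_all_iff] using h.ae_eq_or_eq_neg
  filter_upwards [hval] with x hx
  refine hC _ (mem_closedBall_zero_iff.2 ((pi_norm_le_iff_of_nonneg (abs_nonneg σ)).2 fun i =>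
    (pi_norm_le_iff_of_nonneg (abs_nonneg σ)).2 fun a => ?_))
  rcases hx i a with e | e <;> simp [e]

theorem integral_mul_dotProduct (h : IsRademacherArray μ σ ω) (i : κ) (a : ι) (v : ι → ℝ) :
    ∫ x, ω i x a * (ω i x ⬝ᵥ v) ∂μ = σ ^ 2 * v a := by
  classical
  simp only [dotProduct, mul_sum]
  rw [integral_finsetSum _ fun b _ =>
    h.integrable_comp (F := fun y => y i a * (y i b * v b)) (by fun_prop)]
  simp_rw [← mul_assoc, integral_mul_const, h.integral_mul_eq, ite_mul, zero_mul,
    sum_ite_eq, if_pos (mem_univ a)]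

theorem integral_dotProduct_sq (h : IsRademacherArray μ σ ω) (i : κ) (v : ι → ℝ) :
    ∫ x, (ω i x ⬝ᵥ v) ^ 2 ∂μ = σ ^ 2 * (v ⬝ᵥ v) := by
  have hexp x : (ω i x ⬝ᵥ v) ^ 2 = ∑ a, v a * (ω i x a * (ω i x ⬝ᵥ v)) := by
    rw [sq]
    exact (sum_mul _ _ _).trans (sum_congr rfl fun a _ => by ring)
  simp_rw [hexp]
  rw [integral_finsetSum _ fun a _ =>
    h.integrable_comp (F := fun y => v a * (y i a * (y i ⬝ᵥ v))) (by fun_prop)]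
  simp_rw [integral_const_mul, h.integral_mul_dotProduct, dotProduct, mul_sum]
  exact sum_congr rfl fun a _ => by ring

theorem integral_gram_term [DecidableEq κ] (h : IsRademacherArray μ σ ω) (i j : κ) (v : ι → ℝ) :
    ∫ x, (ω i x ⬝ᵥ ω j x) * ((ω i x ⬝ᵥ v) * (ω j x ⬝ᵥ v)) ∂μ =
      if i = j then Fintype.card ι * σ ^ 4 * (v ⬝ᵥ v) else σ ^ 4 * (v ⬝ᵥ v) := by
  split_ifs with hij
  · subst hij
    have hself : (fun x => (ω i x ⬝ᵥ ω i x) * ((ω i x ⬝ᵥ v) * (ω i x ⬝ᵥ v))) =ᵐ[μ]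
        fun x => Fintype.card ι * σ ^ 2 * (ω i x ⬝ᵥ v) ^ 2 := by
      filter_upwards [h.ae_dotProduct_self_eq i] with x hx
      rw [hx]
      ring
    rw [integral_congr_ae hself, integral_const_mul, h.integral_dotProduct_sq]
    ring
  · have hexp x : (ω i x ⬝ᵥ ω j x) * ((ω i x ⬝ᵥ v) * (ω j x ⬝ᵥ v)) =
        ∑ a, ω i x a * (ω i x ⬝ᵥ v) * (ω j x a * (ω j x ⬝ᵥ v)) :=
      (sum_mul _ _ _).trans (sum_congr rfl fun a _ => by ring)
    have hmeas i : Measurable (ω i) := measurable_pi_lambda _ (h.measurable i)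
    have hfactor a : ∫ x, ω i x a * (ω i x ⬝ᵥ v) * (ω j x a * (ω j x ⬝ᵥ v)) ∂μ =
        σ ^ 2 * v a * (σ ^ 2 * v a) := by
      calc _ = (∫ x, ω i x a * (ω i x ⬝ᵥ v) ∂μ) * ∫ x, ω j x a * (ω j x ⬝ᵥ v) ∂μ :=
            (h.indepFun hij).integral_fun_comp_mul_comp (f := fun y => y a * (y ⬝ᵥ v))
              (g := fun y => y a * (y ⬝ᵥ v)) (hmeas i).aemeasurable (hmeas j).aemeasurable
              (Continuous.aestronglyMeasurable (by fun_prop))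
              (Continuous.aestronglyMeasurable (by fun_prop))
        _ = _ := by rw [h.integral_mul_dotProduct, h.integral_mul_dotProduct]
    simp_rw [hexp]
    rw [integral_finsetSum _ fun a _ => h.integrable_comp
      (F := fun y => y i a * (y i ⬝ᵥ v) * (y j a * (y j ⬝ᵥ v))) (by fun_prop)]
    simp_rw [hfactor, dotProduct, mul_sum]
    exact sum_congr rfl fun a _ => by ring

theorem integral_sum_mul_transpose_mulVec_sq (h : IsRademacherArray μ σ ω) (v : ι → ℝ) :
    ∫ x, ∑ a, ((of (fun a i => ω i x a) * (of fun a i => ω i x a)ᵀ) *ᵥ v) a ^ 2 ∂μ =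
      Fintype.card κ * σ ^ 4 * (Fintype.card ι + Fintype.card κ - 1) * (v ⬝ᵥ v) := by
  classical
  have hgram x : ∑ a, ((of (fun a i => ω i x a) * (of fun a i => ω i x a)ᵀ) *ᵥ v) a ^ 2 =
      ∑ i, ∑ j, (ω i x ⬝ᵥ ω j x) * ((ω i x ⬝ᵥ v) * (ω j x ⬝ᵥ v)) :=
    sum_mul_transpose_mulVec_sq _ v
  simp_rw [hgram]
  have hsplit (i j : κ) : (if i = j then Fintype.card ι * σ ^ 4 * (v ⬝ᵥ v) else σ ^ 4 * (v ⬝ᵥ v)) =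
      σ ^ 4 * (v ⬝ᵥ v) + if i = j then (Fintype.card ι - 1) * σ ^ 4 * (v ⬝ᵥ v) else 0 := by
    split_ifs <;> ring
  have hint (i j : κ) :
      Integrable (fun x => (ω i x ⬝ᵥ ω j x) * ((ω i x ⬝ᵥ v) * (ω j x ⬝ᵥ v))) μ :=
    h.integrable_comp (F := fun y => (y i ⬝ᵥ y j) * ((y i ⬝ᵥ v) * (y j ⬝ᵥ v))) (by fun_prop)
  calc _ = ∑ i, ∑ j, ∫ x, (ω i x ⬝ᵥ ω j x) * ((ω i x ⬝ᵥ v) * (ω j x ⬝ᵥ v)) ∂μ := by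
        rw [integral_finsetSum _ fun i _ => integrable_finsetSum _ fun j _ => hint i j]
        exact sum_congr rfl fun i _ => integral_finsetSum _ fun j _ => hint i j
    _ = _ := by
        simp_rw [h.integral_gram_term, hsplit, sum_add_distrib, sum_ite_eq, if_pos (mem_univ _),
          sum_const, card_univ, nsmul_eq_mul]
        ring

end IsRademacherArray

theorem second_moment_rademacher_general
    {n k : ℕ}
    {Ω : Type*} [MeasureSpace Ω] [IsProbabilityMeasure (ℙ : Measure Ω)]
    (σ : ℝ) (hσ : 0 < σ)
    (ω : Fin k → Ω → Fin n → ℝ)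
    (hmeas : ∀ i a, Measurable fun x => ω i x a)
    (hindep : iIndepFun
      (fun p : Fin k × Fin n => fun x => ω p.1 x p.2) ℙ)
    (hlaw₁ : ∀ i a, ℙ {x | ω i x a = σ} = 1 / 2)
    (hlaw₂ : ∀ i a, ℙ {x | ω i x a = -σ} = 1 / 2) :
    ∀ v : Fin n → ℝ,
      (∫ x, ∑ a, (((Matrix.of fun r c => ω c x r) *
          (Matrix.of fun r c => ω c x r)ᵀ).mulVec v a) ^ 2)
        = (k : ℝ) * σ ^ 4 * ((n : ℝ) + (k : ℝ) - 1) * ∑ a, (v a) ^ 2 := by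
  intro v
  have h := IsRademacherArray.of_measure_eq_half hσ.ne' hmeas hindep hlaw₁ hlaw₂
  rw [h.integral_sum_mul_transpose_mulVec_sq, Fintype.card_fin, Fintype.card_fin]
  simp only [dotProduct, sq]

/-- Second-moment identity for the stochastic direction `g = Ω Ωᵀ v` when the entries of
`Ω` are i.i.d. scaled Rademacher (`±σ` with probability 1/2 each):
`E[‖Ω Ωᵀ v‖²] = k σ⁴ (n + k - 1) ‖v‖²`. -/
theorem second_moment_rademacher
    {n k : ℕ} (hn : 0 < n) (hk : 0 < k)
    {Ω : Type*} [MeasureSpace Ω] [IsProbabilityMeasure (ℙ : Measure Ω)]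
    (σ : ℝ) (hσ : 0 < σ)
    (ω : Fin k → Ω → Fin n → ℝ)
    (hmeas : ∀ i a, Measurable fun x => ω i x a)
    (hindep : iIndepFun
      (fun p : Fin k × Fin n => fun x => ω p.1 x p.2) ℙ)
    (hlaw₁ : ∀ i a, ℙ {x | ω i x a = σ} = 1 / 2)
    (hlaw₂ : ∀ i a, ℙ {x | ω i x a = -σ} = 1 / 2) :
    ∀ v : Fin n → ℝ,
      (∫ x, ∑ a, (((Matrix.of fun r c => ω c x r) *
          (Matrix.of fun r c => ω c x r)ᵀ).mulVec v a) ^ 2)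
        = (k : ℝ) * σ ^ 4 * ((n : ℝ) + (k : ℝ) - 1) * ∑ a, (v a) ^ 2 :=
  second_moment_rademacher_general σ hσ ω hmeas hindep hlaw₁ hlaw₂
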